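/- arXiv:2305.05277 — 7 statements merged into one kernel-verified Lean document; each statement's English description precedes it below -/
import Mathlib

section
/- For an n×n Hermitian positive semidefinite matrix B and σ² > 0, the identity (1/n)·log det(I + B/σ²) = ∫_{σ²}^{∞} (1/t − (1/n)·Tr((tI + B)^{-1})) dt holds (the Shannon transform representation). -/
/-!
Diagonalising `B`, both sides split over its eigenvalues `λ ≥ 0`: `det (1 + B/σ²) = ∏ (1 + λ/σ²)`
and `tr ((t + B)⁻¹) = ∑ (t + λ)⁻¹`. Each scalar term is `∫_{σ²}^∞ (t⁻¹ - (t + λ)⁻¹) dt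
= log (1 + λ/σ²)`, since `log t - log (t + λ)` is a nondecreasing antiderivative that tends to `0`.
-/

open Matrix MeasureTheory Filter
open scoped ComplexOrder

namespace Matrix.IsHermitian

variable {𝕜 n : Type*} [RCLike 𝕜] [Fintype n] [DecidableEq n] {A : Matrix n n 𝕜}

lemma trace_cfc (hA : A.IsHermitian) (f : ℝ → ℝ) :
    (cfc f A).trace = ∑ i, (f (hA.eigenvalues i) : 𝕜) := by
  rw [hA.cfc_eq, IsHermitian.cfc, Unitary.conjStarAlgAut_apply, trace_mul_cycle]
  simp

lemma det_cfc (hA : A.IsHermitian) (f : ℝ → ℝ) :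
    (cfc f A).det = ∏ i, (f (hA.eigenvalues i) : 𝕜) := by
  simp [hA.cfc_eq, IsHermitian.cfc, -Unitary.conjStarAlgAut_apply]

lemma det_one_add_smul (hA : A.IsHermitian) (c : ℝ) :
    (1 + c • A).det = ((∏ i, (1 + c * hA.eigenvalues i) : ℝ) : 𝕜) := by
  rw [RCLike.ofReal_prod, ← hA.det_cfc (fun x => 1 + c * x), cfc_const_add 1 (c * ·) A,
    cfc_const_mul_id c A, map_one]

lemma trace_inv_smul_one_add (hA : A.IsHermitian) {t : ℝ}
    (ht : ∀ i, t + hA.eigenvalues i ≠ 0) :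
    ((t • 1 + A)⁻¹).trace = ((∑ i, (t + hA.eigenvalues i)⁻¹ : ℝ) : 𝕜) := by
  rw [RCLike.ofReal_sum]
  have hspec : ∀ x ∈ spectrum ℝ A, t + id x ≠ 0 := by
    rw [hA.spectrum_real_eq_range_eigenvalues]
    rintro _ ⟨i, rfl⟩
    exact ht i
  have hcfc : t • 1 + A = cfc (fun x => t + id x) A := by
    rw [cfc_const_add t id A, cfc_id ℝ A, Algebra.algebraMap_eq_smul_one]
  rw [hcfc, nonsing_inv_eq_ringInverse, ← cfc_inv _ A hspec, hA.trace_cfc]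
  rfl

end Matrix.IsHermitian

namespace Real

open Set

lemma hasDerivAt_log_sub_log_add {l t : ℝ} (ht : 0 < t) (hl : 0 ≤ l) :
    HasDerivAt (fun s => log s - log (s + l)) (t⁻¹ - (t + l)⁻¹) t :=
  (hasDerivAt_log ht.ne').sub ((hasDerivAt_log (by positivity)).comp_add_const t l)

lemma inv_sub_inv_add_nonneg {l t : ℝ} (ht : 0 < t) (hl : 0 ≤ l) : 0 ≤ t⁻¹ - (t + l)⁻¹ :=
  sub_nonneg.2 (inv_anti₀ ht (le_add_of_nonneg_right hl))

lemma tendsto_log_sub_log_add_atTop (l : ℝ) :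
    Tendsto (fun t => log t - log (t + l)) atTop (nhds 0) := by
  simpa using (tendsto_log_comp_add_sub_log l).neg

variable {a l : ℝ}

lemma integrableOn_Ioi_inv_sub_inv_add (ha : 0 < a) (hl : 0 ≤ l) :
    IntegrableOn (fun t => t⁻¹ - (t + l)⁻¹) (Ioi a) :=
  integrableOn_Ioi_deriv_of_nonneg'
    (fun _ ht => hasDerivAt_log_sub_log_add (ha.trans_le ht) hl)
    (fun _ ht => inv_sub_inv_add_nonneg (ha.trans ht) hl) (tendsto_log_sub_log_add_atTop l)

lemma integral_Ioi_inv_sub_inv_add (ha : 0 < a) (hl : 0 ≤ l) :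
    ∫ t in Ioi a, (t⁻¹ - (t + l)⁻¹) = log (1 + l / a) := by
  rw [integral_Ioi_of_hasDerivAt_of_nonneg'
    (fun _ ht => hasDerivAt_log_sub_log_add (ha.trans_le ht) hl)
    (fun _ ht => inv_sub_inv_add_nonneg (ha.trans ht) hl) (tendsto_log_sub_log_add_atTop l),
    one_add_div ha.ne', log_div (by positivity) ha.ne']
  ring

lemma inv_card_mul_sum_log_eq_integral {ι : Type*} [Fintype ι] [Nonempty ι] (ha : 0 < a)
    {l : ι → ℝ} (hl : ∀ i, 0 ≤ l i) :
    (Fintype.card ι : ℝ)⁻¹ * ∑ i, log (1 + l i / a)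
      = ∫ t in Ioi a, (t⁻¹ - (Fintype.card ι : ℝ)⁻¹ * ∑ i, (t + l i)⁻¹) := by
  have hcard : (Fintype.card ι : ℝ) ≠ 0 := by positivity
  have hintegrand : ∀ t, t⁻¹ - (Fintype.card ι : ℝ)⁻¹ * ∑ i, (t + l i)⁻¹
      = (Fintype.card ι : ℝ)⁻¹ * ∑ i, (t⁻¹ - (t + l i)⁻¹) := by
    intro t
    rw [Finset.sum_sub_distrib, Finset.sum_const, Finset.card_univ, nsmul_eq_mul, mul_sub,
      inv_mul_cancel_left₀ hcard]
  simp_rw [hintegrand]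
  rw [integral_const_mul,
    integral_finsetSum _ fun i _ => integrableOn_Ioi_inv_sub_inv_add ha (hl i)]
  simp_rw [integral_Ioi_inv_sub_inv_add ha (hl _)]

end Real

/-- Shannon transform representation of the normalized log-determinant. -/
theorem stmt_1 {n : ℕ} (hn : 0 < n) (B : Matrix (Fin n) (Fin n) ℂ) (hB : B.PosSemidef)
    (σ2 : ℝ) (hσ : 0 < σ2) :
    (1 / n : ℝ) * Real.log (((1 : Matrix (Fin n) (Fin n) ℂ) + (σ2 : ℂ)⁻¹ • B).det.re)
      = ∫ t in Set.Ici σ2,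
          (1 / t - ((1 / (n : ℂ)) * Matrix.trace
            (((t : ℂ) • (1 : Matrix (Fin n) (Fin n) ℂ) + B)⁻¹)).re) := by
  have : Nonempty (Fin n) := Fin.pos_iff_nonempty.mp hn
  have hA := hB.isHermitian
  have hnonneg := hB.eigenvalues_nonneg
  have hdet : ((1 : Matrix (Fin n) (Fin n) ℂ) + (σ2 : ℂ)⁻¹ • B).det.re
      = ∏ i, (1 + hA.eigenvalues i / σ2) := by
    rw [← Complex.ofReal_inv, Complex.coe_smul, hA.det_one_add_smul]
    simp_rw [inv_mul_eq_div]
    exact Complex.ofReal_re _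
  have hintegrand : ∀ t ∈ Set.Ioi σ2,
      1 / t - ((1 / (n : ℂ)) * ((t : ℂ) • (1 : Matrix (Fin n) (Fin n) ℂ) + B)⁻¹.trace).re
        = t⁻¹ - (Fintype.card (Fin n) : ℝ)⁻¹ * ∑ i, (t + hA.eigenvalues i)⁻¹ := by
    intro t ht
    have hpos i : 0 < t + hA.eigenvalues i := add_pos_of_pos_of_nonneg (hσ.trans ht) (hnonneg i)
    rw [Complex.coe_smul, hA.trace_inv_smul_one_add fun i => (hpos i).ne', Fintype.card_fin,
      one_div, one_div, ← Complex.ofReal_natCast, ← Complex.ofReal_inv, Complex.re_ofReal_mul]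
    exact congrArg (t⁻¹ - (n : ℝ)⁻¹ * ·) (Complex.ofReal_re _)
  have hfactor i : 1 + hA.eigenvalues i / σ2 ≠ 0 := by
    have := div_nonneg (hnonneg i) hσ.le
    positivity
  rw [hdet, Real.log_prod fun i _ => hfactor i, integral_Ici_eq_integral_Ioi,
    setIntegral_congr_fun measurableSet_Ioi hintegrand,
    ← Real.inv_card_mul_sum_log_eq_integral hσ hnonneg, Fintype.card_fin, one_div]
end

section
/- Let R be an n×n Hermitian positive semidefinite matrix with spectral norm ‖R‖. For any z < 0 and any complex numbers α, α' with nonnegative real parts, defining Q(α) = (−zI + αR)^{-1}, we have |(1/n)·Tr(R·Q(α)·R·Q(α'))| ≤ ‖R‖²/z², so that the map α ↦ (1/n)·Tr(R(−zI + αR)^{-1}) is Lipschitz with constant ‖R‖²/z² on the right half-plane. -/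
open Matrix
open scoped ComplexOrder Matrix.Norms.L2Operator

/-!
For `Re c > 0` and `Re α ≥ 0` the matrix `c • 1 + α • R` is coercive,
`Re ⟪x, (c • 1 + α • R) x⟫ ≥ Re c * ‖x‖²`, because `⟪x, R x⟫ ≥ 0`. Hence it is invertible and its
inverse `Q(α)` has operator norm at most `1 / Re c`. As `|Tr A| ≤ n ‖A‖`, the normalized trace of
`R Q(α) R Q(α')` is at most `‖R‖² / (Re c)²`, and the resolvent identity
`Q(α) - Q(α') = (α' - α) Q(α) R Q(α')` turns this bound into the Lipschitz estimate.
The theorem is the case `c = -z`.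
-/

theorem mul_norm_le_norm_of_mul_norm_sq_le_re_inner {𝕜 E : Type*} [RCLike 𝕜]
    [NormedAddCommGroup E] [InnerProductSpace 𝕜 E] {c : ℝ} {x y : E}
    (h : c * ‖x‖ ^ 2 ≤ RCLike.re (inner 𝕜 x y)) : c * ‖x‖ ≤ ‖y‖ := by
  rcases (norm_nonneg x).eq_or_lt with hx | hx
  · simp [← hx]
  · have := h.trans (re_inner_le_norm x y)
    nlinarith

namespace Matrix

variable {𝕜 ι : Type*} [RCLike 𝕜] [Fintype ι] [DecidableEq ι]

theorem isUnit_of_coercive {A : Matrix ι ι 𝕜} {c : ℝ} (hc : 0 < c)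
    (hA : ∀ x, c * ‖x‖ ^ 2 ≤ RCLike.re (inner 𝕜 x (toEuclideanCLM (𝕜 := 𝕜) A x))) :
    IsUnit A := by
  refine mulVec_injective_iff_isUnit.1 fun v w hvw => ?_
  have h := mul_norm_le_norm_of_mul_norm_sq_le_re_inner (hA (WithLp.toLp 2 (v - w)))
  rw [toEuclideanCLM_toLp, mulVec_sub, hvw, sub_self, WithLp.toLp_zero, norm_zero] at h
  have hvw : WithLp.toLp 2 (v - w) = 0 := norm_le_zero_iff.1 (nonpos_of_mul_nonpos_right h hc)
  simpa [sub_eq_zero] using hvw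

theorem l2_opNorm_inv_le_of_coercive {A : Matrix ι ι 𝕜} {c : ℝ} (hc : 0 < c)
    (hA : ∀ x, c * ‖x‖ ^ 2 ≤ RCLike.re (inner 𝕜 x (toEuclideanCLM (𝕜 := 𝕜) A x))) :
    ‖A⁻¹‖ ≤ c⁻¹ := by
  rw [← l2_opNorm_toEuclideanCLM]
  refine ContinuousLinearMap.opNorm_le_bound _ (inv_nonneg.2 hc.le) fun y => ?_
  have hAA : toEuclideanCLM (𝕜 := 𝕜) A (toEuclideanCLM (𝕜 := 𝕜) A⁻¹ y) = y := by
    ext i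
    simp [ofLp_toEuclideanCLM, mulVec_mulVec,
      mul_nonsing_inv _ ((isUnit_of_coercive hc hA).map detMonoidHom)]
  have h := mul_norm_le_norm_of_mul_norm_sq_le_re_inner (hA (toEuclideanCLM (𝕜 := 𝕜) A⁻¹ y))
  rw [hAA] at h
  rw [inv_mul_eq_div, le_div_iff₀ hc]
  linarith

theorem norm_entry_le_l2_opNorm (A : Matrix ι ι 𝕜) (i j : ι) : ‖A i j‖ ≤ ‖A‖ := by
  set e : EuclideanSpace 𝕜 ι := EuclideanSpace.single j 1
  calc ‖A i j‖ = ‖(toEuclideanCLM (𝕜 := 𝕜) A e).ofLp i‖ := by simp [e, ofLp_toEuclideanCLM]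
    _ ≤ ‖toEuclideanCLM (𝕜 := 𝕜) A e‖ := PiLp.norm_apply_le _ i
    _ ≤ ‖toEuclideanCLM (𝕜 := 𝕜) A‖ * ‖e‖ := ContinuousLinearMap.le_opNorm _ e
    _ = ‖A‖ := by simp [e, l2_opNorm_toEuclideanCLM]

theorem norm_trace_le_card_mul_l2_opNorm (A : Matrix ι ι 𝕜) :
    ‖A.trace‖ ≤ Fintype.card ι * ‖A‖ :=
  calc ‖A.trace‖ ≤ ∑ i, ‖A i i‖ := norm_sum_le _ _
    _ ≤ ∑ _i : ι, ‖A‖ := Finset.sum_le_sum fun i _ => A.norm_entry_le_l2_opNorm i i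
    _ = Fintype.card ι * ‖A‖ := by simp

theorem norm_inv_card_mul_trace_le (A : Matrix ι ι 𝕜) :
    ‖(Fintype.card ι : 𝕜)⁻¹ * A.trace‖ ≤ ‖A‖ := by
  rw [norm_mul, norm_inv, RCLike.norm_natCast]
  rcases (Fintype.card ι).eq_zero_or_pos with h | h
  · simp [h]
  · rw [inv_mul_le_iff₀ (by exact_mod_cast h)]
    exact A.norm_trace_le_card_mul_l2_opNorm

theorem trace_mul_inv_sub_trace_mul_inv {K : Type*} [CommRing K] (R : Matrix ι ι K)
    {c α α' : K} (hα : IsUnit (c • 1 + α • R)) (hα' : IsUnit (c • 1 + α' • R)) :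
    trace (R * (c • 1 + α • R)⁻¹) - trace (R * (c • 1 + α' • R)⁻¹) =
      (α' - α) * trace (R * (c • 1 + α • R)⁻¹ * R * (c • 1 + α' • R)⁻¹) := by
  rw [← trace_sub, ← Matrix.mul_sub, inv_sub_inv (iff_of_true hα hα'),
    add_sub_add_left_eq_sub, ← sub_smul, Matrix.mul_smul, Matrix.smul_mul, Matrix.mul_smul,
    trace_smul, smul_eq_mul, Matrix.mul_assoc, Matrix.mul_assoc, Matrix.mul_assoc]

namespace PosSemidef

variable {R : Matrix ι ι 𝕜} {c α α' : 𝕜}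

theorem re_inner_smul_one_add_smul_ge (hR : R.PosSemidef) (hα : 0 ≤ RCLike.re α)
    (x : EuclideanSpace 𝕜 ι) :
    RCLike.re c * ‖x‖ ^ 2 ≤
      RCLike.re (inner 𝕜 x (toEuclideanCLM (𝕜 := 𝕜) (c • 1 + α • R) x)) := by
  have hRx : 0 ≤ inner 𝕜 x (toEuclideanCLM (𝕜 := 𝕜) R x) :=
    (isPositive_toEuclideanLin_iff.2 hR).inner_nonneg_right x
  obtain ⟨hre, him⟩ := RCLike.nonneg_iff.1 hRx
  have hsplit : RCLike.re (inner 𝕜 x (toEuclideanCLM (𝕜 := 𝕜) (c • 1 + α • R) x)) =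
      RCLike.re c * ‖x‖ ^ 2 +
        RCLike.re α * RCLike.re (inner 𝕜 x (toEuclideanCLM (𝕜 := 𝕜) R x)) := by
    simp [inner_add_right, inner_smul_right, inner_self_eq_norm_sq_to_K, RCLike.mul_re, him]
  rw [hsplit]
  nlinarith [mul_nonneg hα hre]

theorem isUnit_smul_one_add_smul (hR : R.PosSemidef) (hc : 0 < RCLike.re c)
    (hα : 0 ≤ RCLike.re α) : IsUnit (c • 1 + α • R) :=
  isUnit_of_coercive hc (hR.re_inner_smul_one_add_smul_ge hα)

theorem l2_opNorm_inv_smul_one_add_smul_le (hR : R.PosSemidef) (hc : 0 < RCLike.re c)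
    (hα : 0 ≤ RCLike.re α) : ‖(c • 1 + α • R)⁻¹‖ ≤ (RCLike.re c)⁻¹ :=
  l2_opNorm_inv_le_of_coercive hc (hR.re_inner_smul_one_add_smul_ge hα)

theorem norm_inv_card_mul_trace_mul_inv_mul_inv_le (hR : R.PosSemidef) (hc : 0 < RCLike.re c)
    (hα : 0 ≤ RCLike.re α) (hα' : 0 ≤ RCLike.re α') :
    ‖(Fintype.card ι : 𝕜)⁻¹ * trace (R * (c • 1 + α • R)⁻¹ * R * (c • 1 + α' • R)⁻¹)‖ ≤
      ‖R‖ ^ 2 / RCLike.re c ^ 2 := by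
  have hQ := hR.l2_opNorm_inv_smul_one_add_smul_le hc hα
  have hQ' := hR.l2_opNorm_inv_smul_one_add_smul_le hc hα'
  calc _ ≤ ‖R * (c • 1 + α • R)⁻¹ * R * (c • 1 + α' • R)⁻¹‖ := norm_inv_card_mul_trace_le _
    _ ≤ ‖R‖ * ‖(c • 1 + α • R)⁻¹‖ * ‖R‖ * ‖(c • 1 + α' • R)⁻¹‖ := by
      grw [norm_mul_le, norm_mul_le, norm_mul_le]
    _ ≤ ‖R‖ * (RCLike.re c)⁻¹ * ‖R‖ * (RCLike.re c)⁻¹ := by gcongr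
    _ = ‖R‖ ^ 2 / RCLike.re c ^ 2 := by ring

theorem lipschitzOnWith_inv_card_mul_trace_mul_inv (hR : R.PosSemidef)
    (hc : 0 < RCLike.re c) :
    LipschitzOnWith (‖R‖ ^ 2 / RCLike.re c ^ 2).toNNReal
      (fun α : 𝕜 => (Fintype.card ι : 𝕜)⁻¹ * trace (R * (c • 1 + α • R)⁻¹))
      {α : 𝕜 | 0 ≤ RCLike.re α} := by
  refine LipschitzOnWith.of_dist_le_mul fun α hα α' hα' => ?_
  rw [dist_eq_norm, dist_eq_norm, ← mul_sub, trace_mul_inv_sub_trace_mul_inv R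
    (hR.isUnit_smul_one_add_smul hc hα) (hR.isUnit_smul_one_add_smul hc hα'), mul_left_comm,
    norm_mul, norm_sub_rev, Real.coe_toNNReal _ (by positivity), mul_comm]
  exact mul_le_mul_of_nonneg_right
    (hR.norm_inv_card_mul_trace_mul_inv_mul_inv_le hc hα hα') (norm_nonneg _)

end PosSemidef

end Matrix

theorem stmt_3_general {n : ℕ} (R : Matrix (Fin n) (Fin n) ℂ) (hR : R.PosSemidef)
    (z : ℝ) (hz : z < 0) :
    (∀ α α' : ℂ, 0 ≤ α.re → 0 ≤ α'.re →
      ‖((1 / (n : ℂ)) * Matrix.trace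
        (R * ((-z : ℂ) • (1 : Matrix (Fin n) (Fin n) ℂ) + α • R)⁻¹ *
         R * ((-z : ℂ) • (1 : Matrix (Fin n) (Fin n) ℂ) + α' • R)⁻¹))‖ ≤ ‖R‖ ^ 2 / z ^ 2) ∧
    LipschitzOnWith (‖R‖ ^ 2 / z ^ 2).toNNReal
      (fun α : ℂ => (1 / (n : ℂ)) * Matrix.trace
        (R * ((-z : ℂ) • (1 : Matrix (Fin n) (Fin n) ℂ) + α • R)⁻¹))
      {α : ℂ | 0 ≤ α.re} := by
  have hc : 0 < RCLike.re (-z : ℂ) := by simpa using hz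
  have hcard : 1 / (n : ℂ) = (Fintype.card (Fin n) : ℂ)⁻¹ := by simp
  have hz2 : z ^ 2 = RCLike.re (-z : ℂ) ^ 2 := by simp
  rw [hcard, hz2]
  exact ⟨fun α α' hα hα' => hR.norm_inv_card_mul_trace_mul_inv_mul_inv_le hc hα hα',
    hR.lipschitzOnWith_inv_card_mul_trace_mul_inv hc⟩

/-- Resolvent product trace bound and Lipschitz continuity of the trace functional. -/
theorem stmt_3 {n : ℕ} (hn : 0 < n) (R : Matrix (Fin n) (Fin n) ℂ) (hR : R.PosSemidef)
    (z : ℝ) (hz : z < 0) :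
    (∀ α α' : ℂ, 0 ≤ α.re → 0 ≤ α'.re →
      ‖((1 / (n : ℂ)) * Matrix.trace
        (R * ((-z : ℂ) • (1 : Matrix (Fin n) (Fin n) ℂ) + α • R)⁻¹ *
         R * ((-z : ℂ) • (1 : Matrix (Fin n) (Fin n) ℂ) + α' • R)⁻¹))‖ ≤ ‖R‖ ^ 2 / z ^ 2) ∧
    LipschitzOnWith (‖R‖ ^ 2 / z ^ 2).toNNReal
      (fun α : ℂ => (1 / (n : ℂ)) * Matrix.trace
        (R * ((-z : ℂ) • (1 : Matrix (Fin n) (Fin n) ℂ) + α • R)⁻¹))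
      {α : ℂ | 0 ≤ α.re} :=
  stmt_3_general R hR z hz
end

section
/- Let R be an n×n Hermitian positive semidefinite matrix and z < 0. The fixed-point equation δ = (1/n)·Tr(R(−zI + δR)^{-1}) has a unique solution δ ≥ 0, and it satisfies δ ≤ ‖R‖/|z|. -/
open Matrix Set
open scoped ComplexOrder Matrix.Norms.L2Operator

/-!
Diagonalising `R = U diag(λ) Uᴴ` turns the right-hand side of the equation into
`f δ = (1/n) ∑ λᵢ / (-z + δ λᵢ)`. On `[0, ∞)` this is continuous, nonnegative and antitone,
so `δ - f δ` changes sign on `[0, f 0]` (existence), two fixed points `x ≤ y` would give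
`y = f y ≤ f x = x` (uniqueness), and every fixed point satisfies
`δ = f δ ≤ f 0 = (1/n) ∑ λᵢ / |z| ≤ ‖R‖ / |z|` because `λᵢ ≤ ‖R‖`.
-/

/-- `resolventMean λ c δ = (1/n) ∑ λᵢ / (c + δ λᵢ)`, the normalised trace of `R (c I + δ R)⁻¹`
when `λ` are the eigenvalues of `R`. -/
noncomputable def resolventMean {ι : Type*} [Fintype ι] (μ : ι → ℝ) (c δ : ℝ) : ℝ :=
  (Fintype.card ι : ℝ)⁻¹ * ∑ i, μ i / (c + δ * μ i)

section resolventMean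

variable {ι : Type*} [Fintype ι] {μ : ι → ℝ} {c : ℝ}

theorem resolventMean_antitoneOn (hμ : ∀ i, 0 ≤ μ i) (hc : 0 < c) :
    AntitoneOn (resolventMean μ c) (Ici 0) := by
  intro a ha b _ hab
  refine mul_le_mul_of_nonneg_left (Finset.sum_le_sum fun i _ => ?_) (by positivity)
  exact div_le_div_of_nonneg_left (hμ i) (add_pos_of_pos_of_nonneg hc (mul_nonneg ha (hμ i)))
    (by gcongr; exact hμ i)

theorem resolventMean_continuousOn (hμ : ∀ i, 0 ≤ μ i) (hc : 0 < c) :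
    ContinuousOn (resolventMean μ c) (Ici 0) := by
  refine continuousOn_const.mul (continuousOn_finsetSum _ fun i _ => ?_)
  exact continuousOn_const.div (by fun_prop) fun δ hδ =>
    (add_pos_of_pos_of_nonneg hc (mul_nonneg hδ (hμ i))).ne'

theorem resolventMean_nonneg (hμ : ∀ i, 0 ≤ μ i) (hc : 0 < c) {δ : ℝ} (hδ : 0 ≤ δ) :
    0 ≤ resolventMean μ c δ :=
  mul_nonneg (by positivity) (Finset.sum_nonneg fun i _ =>
    div_nonneg (hμ i) (add_pos_of_pos_of_nonneg hc (mul_nonneg hδ (hμ i))).le)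

theorem resolventMean_zero_le {M : ℝ} (hμM : ∀ i, μ i ≤ M) (hM : 0 ≤ M) (hc : 0 ≤ c) :
    resolventMean μ c 0 ≤ M / c := by
  have hsum : ∑ i, μ i / (c + 0 * μ i) ≤ Fintype.card ι * (M / c) := by
    simpa using Finset.sum_le_sum fun i (_ : i ∈ Finset.univ) =>
      div_le_div_of_nonneg_right (hμM i) hc
  calc resolventMean μ c 0 ≤ (Fintype.card ι : ℝ)⁻¹ * (Fintype.card ι * (M / c)) :=
        mul_le_mul_of_nonneg_left hsum (by positivity)
    _ ≤ M / c := by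
        rw [← mul_assoc]
        exact mul_le_of_le_one_left (by positivity) (inv_mul_le_one_of_le₀ le_rfl (by positivity))

end resolventMean

theorem existsUnique_nonneg_eq_of_antitoneOn {f : ℝ → ℝ} (hf : ContinuousOn f (Ici 0))
    (hanti : AntitoneOn f (Ici 0)) (h0 : 0 ≤ f 0) : ∃! x, 0 ≤ x ∧ x = f x := by
  obtain ⟨x, hx, hfx⟩ : ∃ x ∈ Icc 0 (f 0), x - f x = 0 :=
    intermediate_value_Icc h0 ((continuousOn_id.sub hf).mono Icc_subset_Ici_self)
      ⟨by simpa using h0, by simpa using hanti self_mem_Ici h0 h0⟩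
  refine ⟨x, ⟨hx.1, by linarith⟩, fun y ⟨hy, hyf⟩ => ?_⟩
  rcases le_total y x with hyx | hxy
  · linarith [hanti hy hx.1 hyx]
  · linarith [hanti hx.1 hy hxy]

namespace Matrix

variable {n α : Type*} [Fintype n] [DecidableEq n] [CommRing α] [StarRing α]

theorem conjStarAlgAut_inv (U : unitaryGroup n α) (X : Matrix n n α) :
    (Unitary.conjStarAlgAut α _ U X)⁻¹ = Unitary.conjStarAlgAut α _ U X⁻¹ := by
  have hU : (U : Matrix n n α)⁻¹ = star (U : Matrix n n α) :=
    inv_eq_left_inv (Unitary.coe_star_mul_self U)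
  have hU' : (star (U : Matrix n n α))⁻¹ = U :=
    inv_eq_left_inv (Unitary.coe_mul_star_self U)
  simp only [Unitary.conjStarAlgAut_apply, mul_inv_rev, hU, hU', mul_assoc]

theorem trace_conjStarAlgAut (U : unitaryGroup n α) (X : Matrix n n α) :
    trace (Unitary.conjStarAlgAut α _ U X) = trace X := by
  rw [Unitary.conjStarAlgAut_apply, trace_mul_cycle, Unitary.coe_star_mul_self, one_mul]

theorem inv_diagonal_of_ne_zero {K : Type*} [Field K] {d : n → K} (hd : ∀ i, d i ≠ 0) :
    (diagonal d)⁻¹ = diagonal fun i => (d i)⁻¹ := by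
  refine inv_eq_right_inv ?_
  rw [diagonal_mul_diagonal, ← diagonal_one]
  exact congrArg diagonal (funext fun i => mul_inv_cancel₀ (hd i))

theorem IsHermitian.trace_mul_inv_smul_one_add_smul {𝕜 : Type*} [RCLike 𝕜] {A : Matrix n n 𝕜}
    (hA : A.IsHermitian) (a b : ℝ) (h : ∀ i, a + b * hA.eigenvalues i ≠ 0) :
    trace (A * ((a : 𝕜) • 1 + (b : 𝕜) • A)⁻¹) =
      ∑ i, ((hA.eigenvalues i / (a + b * hA.eigenvalues i) : ℝ) : 𝕜) := by
  have hdiag : (a : 𝕜) • 1 + (b : 𝕜) • diagonal (RCLike.ofReal ∘ hA.eigenvalues) =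
      diagonal fun i => ((a + b * hA.eigenvalues i : ℝ) : 𝕜) := by
    rw [← diagonal_one, ← diagonal_smul, ← diagonal_smul, diagonal_add]
    simp
  conv_lhs => rw [hA.spectral_theorem]
  rw [← map_one (Unitary.conjStarAlgAut 𝕜 _ hA.eigenvectorUnitary),
    ← map_smul, ← map_smul, ← map_add, conjStarAlgAut_inv, ← map_mul, trace_conjStarAlgAut,
    hdiag, inv_diagonal_of_ne_zero (fun i => RCLike.ofReal_ne_zero.2 (h i)),
    diagonal_mul_diagonal, trace_diagonal]
  simp [div_eq_mul_inv]

theorem IsHermitian.abs_eigenvalues_le_l2_opNorm {𝕜 : Type*} [RCLike 𝕜] {A : Matrix n n 𝕜}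
    (hA : A.IsHermitian) (i : n) : |hA.eigenvalues i| ≤ ‖A‖ := by
  have : Nonempty n := ⟨i⟩
  have h : ((hA.eigenvalues i : ℝ) : 𝕜) ∈ spectrum 𝕜 A :=
    spectrum.of_algebraMap_mem 𝕜 (hA.eigenvalues_mem_spectrum_real i)
  simpa using spectrum.norm_le_norm_of_mem h

theorem PosSemidef.card_inv_mul_trace_mul_inv_smul_one_add_smul {𝕜 : Type*} [RCLike 𝕜]
    {A : Matrix n n 𝕜} (hA : A.PosSemidef) {c δ : ℝ} (hc : 0 < c) (hδ : 0 ≤ δ) :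
    (Fintype.card n : 𝕜)⁻¹ * trace (A * ((c : 𝕜) • 1 + (δ : 𝕜) • A)⁻¹) =
      resolventMean hA.1.eigenvalues c δ := by
  rw [hA.1.trace_mul_inv_smul_one_add_smul c δ fun i =>
    (add_pos_of_pos_of_nonneg hc (mul_nonneg hδ (hA.eigenvalues_nonneg i))).ne', resolventMean,
    RCLike.ofReal_mul, RCLike.ofReal_inv, RCLike.ofReal_natCast, RCLike.ofReal_sum]

end Matrix

theorem stmt_4_general {n : ℕ} (R : Matrix (Fin n) (Fin n) ℂ) (hR : R.PosSemidef)
    (z : ℝ) (hz : z < 0) :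
    (∃! δ : ℝ, 0 ≤ δ ∧ δ = ((1 / (n : ℂ)) * Matrix.trace
      (R * ((-z : ℂ) • (1 : Matrix (Fin n) (Fin n) ℂ) + (δ : ℂ) • R)⁻¹)).re) ∧
    ∀ δ : ℝ, 0 ≤ δ →
      δ = ((1 / (n : ℂ)) * Matrix.trace
        (R * ((-z : ℂ) • (1 : Matrix (Fin n) (Fin n) ℂ) + (δ : ℂ) • R)⁻¹)).re →
      δ ≤ ‖R‖ / |z| := by
  have hc : 0 < -z := neg_pos.2 hz
  set f := resolventMean hR.1.eigenvalues (-z)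
  have hf : ∀ δ : ℝ, 0 ≤ δ → ((1 / (n : ℂ)) * Matrix.trace
      (R * ((-z : ℂ) • (1 : Matrix (Fin n) (Fin n) ℂ) + (δ : ℂ) • R)⁻¹)).re = f δ := by
    intro δ hδ
    have h := hR.card_inv_mul_trace_mul_inv_smul_one_add_smul hc hδ
    simpa using congrArg Complex.re h
  have hanti := resolventMean_antitoneOn hR.eigenvalues_nonneg hc
  refine ⟨(existsUnique_congr fun δ => and_congr_right fun hδ => by rw [hf δ hδ]).2
    (existsUnique_nonneg_eq_of_antitoneOn (resolventMean_continuousOn hR.eigenvalues_nonneg hc)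
      hanti (resolventMean_nonneg hR.eigenvalues_nonneg hc le_rfl)), fun δ hδ hfix => ?_⟩
  rw [hf δ hδ] at hfix
  calc δ = f δ := hfix
    _ ≤ f 0 := hanti self_mem_Ici hδ hδ
    _ ≤ ‖R‖ / -z := resolventMean_zero_le
        (fun i => (le_abs_self _).trans (hR.1.abs_eigenvalues_le_l2_opNorm i)) (norm_nonneg R) hc.le
    _ = ‖R‖ / |z| := by rw [abs_of_neg hz]

/-- Existence, uniqueness and bound for the scalar fixed-point equation. -/
theorem stmt_4 {n : ℕ} (hn : 0 < n) (R : Matrix (Fin n) (Fin n) ℂ) (hR : R.PosSemidef)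
    (z : ℝ) (hz : z < 0) :
    (∃! δ : ℝ, 0 ≤ δ ∧ δ = ((1 / (n : ℂ)) * Matrix.trace
      (R * ((-z : ℂ) • (1 : Matrix (Fin n) (Fin n) ℂ) + (δ : ℂ) • R)⁻¹)).re) ∧
    ∀ δ : ℝ, 0 ≤ δ →
      δ = ((1 / (n : ℂ)) * Matrix.trace
        (R * ((-z : ℂ) • (1 : Matrix (Fin n) (Fin n) ℂ) + (δ : ℂ) • R)⁻¹)).re →
      δ ≤ ‖R‖ / |z| :=
  stmt_4_general R hR z hz
end

section
/- Water-filling optimality: let T be an n×n Hermitian positive definite matrix with eigendecomposition T = U·Λ·Uᴴ, Λ = diag(λ₁,…,λₙ) with λᵢ > 0, and let a > 0, P > 0. The maximum of log det(I + a·Q·T) over Hermitian positive semidefinite Q with Tr(Q) ≤ nP is attained by Q* = U·diag(q₁,…,qₙ)·Uᴴ with qᵢ = max(μ − 1/(aλᵢ), 0), where μ is chosen so that Σᵢ qᵢ = nP. -/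
/-!
Write `a T = U D Uᴴ` with `D = diag (a λᵢ)`, and `Q' = Uᴴ Q U`. Since
`det (1 + X Y) = det (1 + Y X)`, `det (1 + a Q T) = det (1 + Q' D) = det (1 + S Q' S)` with
`S = √D`, and Hadamard's inequality bounds this by `∏ᵢ (1 + a λᵢ Q'ᵢᵢ)`. The `Q'ᵢᵢ` are nonnegative
with sum `tr Q ≤ n P`, and for `Q*` the bound is attained with `Q'ᵢᵢ = qᵢ`. It remains to maximise
the concave function `∑ᵢ log (1 + a λᵢ tᵢ)` over `tᵢ ≥ 0`, `∑ tᵢ ≤ ∑ qᵢ`; the water-filling levels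
`qᵢ` satisfy its KKT conditions with multiplier `1 / μ`.
-/

open Matrix
open scoped ComplexOrder

namespace Matrix

variable {n 𝕜 : Type*} [Fintype n] [DecidableEq n] [RCLike 𝕜]

theorem PosDef.log_re_det_le_re_trace_sub_card {A : Matrix n n 𝕜} (hA : A.PosDef) :
    Real.log (RCLike.re A.det) ≤ RCLike.re A.trace - Fintype.card n := by
  have hev := hA.eigenvalues_pos
  rw [hA.isHermitian.det_eq_prod_eigenvalues, hA.isHermitian.trace_eq_sum_eigenvalues,
    ← RCLike.ofReal_prod, ← RCLike.ofReal_sum, RCLike.ofReal_re, RCLike.ofReal_re,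
    Real.log_prod fun i _ => (hev i).ne']
  calc ∑ i, Real.log (hA.1.eigenvalues i) ≤ ∑ i, (hA.1.eigenvalues i - 1) :=
        Finset.sum_le_sum fun i _ => Real.log_le_sub_one_of_pos (hev i)
    _ = _ := by simp [Finset.sum_sub_distrib]

theorem PosDef.re_det_le_prod_re_diag {A : Matrix n n 𝕜} (hA : A.PosDef) :
    RCLike.re A.det ≤ ∏ i, RCLike.re (A i i) := by
  set d : n → ℝ := fun i => RCLike.re (A i i)
  have hd : ∀ i, 0 < d i := fun i => (RCLike.pos_iff.1 hA.diag_pos).1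
  -- `D A D` has unit diagonal, so the previous lemma gives `det (D A D) ≤ 1`.
  set D : Matrix n n 𝕜 := diagonal fun i => (((√(d i))⁻¹ : ℝ) : 𝕜)
  have hDinj : Function.Injective D.mulVec := by
    refine mulVec_injective_iff_isUnit.2 ((isUnit_iff_isUnit_det D).2 (isUnit_iff_ne_zero.2 ?_))
    simp [D, det_diagonal, Finset.prod_ne_zero_iff, fun i => (Real.sqrt_pos.2 (hd i)).ne']
  have hD : Dᴴ = D :=
    (isHermitian_diagonal_of_self_adjoint _ (funext fun _ => RCLike.conj_ofReal _)).eq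
  have hY : (D * A * D).PosDef := by
    simpa only [hD] using hA.conjTranspose_mul_mul_same hDinj
  have htrace : RCLike.re (D * A * D).trace = Fintype.card n := by
    have hentry : ∀ i, (D * A * D) i i = 1 := fun i => by
      simp only [D, diagonal_mul, mul_diagonal]
      rw [← hA.isHermitian.coe_re_apply_self i, ← RCLike.ofReal_mul, ← RCLike.ofReal_mul,
        ← RCLike.ofReal_one, RCLike.ofReal_inj, mul_comm, ← mul_assoc, ← mul_inv,
        Real.mul_self_sqrt (hd i).le, inv_mul_cancel₀ (hd i).ne']
    simp [trace, hentry]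
  have hdet : RCLike.re (D * A * D).det = RCLike.re A.det / ∏ i, d i := by
    have hDdet : D.det = ((∏ i, (√(d i))⁻¹ : ℝ) : 𝕜) := by simp [D, det_diagonal]
    have hsq : (∏ i, (√(d i))⁻¹) * (∏ i, (√(d i))⁻¹) = (∏ i, d i)⁻¹ := by
      rw [← Finset.prod_mul_distrib, ← Finset.prod_inv_distrib]
      exact Finset.prod_congr rfl fun i _ => by rw [← mul_inv, Real.mul_self_sqrt (hd i).le]
    rw [det_mul, det_mul, hDdet, mul_comm, ← mul_assoc, ← RCLike.ofReal_mul, hsq,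
      RCLike.re_ofReal_mul, div_eq_inv_mul]
  have hlog := hY.log_re_det_le_re_trace_sub_card
  have hpos : 0 < RCLike.re (D * A * D).det := (RCLike.pos_iff.1 hY.det_pos).1
  rw [htrace, sub_self, Real.log_nonpos_iff hpos.le] at hlog
  rwa [hdet, div_le_one (Finset.prod_pos fun i _ => hd i)] at hlog

theorem PosSemidef.re_det_one_add_mul_diagonal {Q : Matrix n n 𝕜} (hQ : Q.PosSemidef)
    {x : n → ℝ} (hx : ∀ i, 0 ≤ x i) :
    0 < RCLike.re (1 + Q * diagonal fun i => (x i : 𝕜)).det ∧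
      RCLike.re (1 + Q * diagonal fun i => (x i : 𝕜)).det ≤
        ∏ i, (1 + x i * RCLike.re (Q i i)) := by
  set S : Matrix n n 𝕜 := diagonal fun i => ((√(x i) : ℝ) : 𝕜)
  have hSS : S * S = diagonal fun i => (x i : 𝕜) := by
    rw [diagonal_mul_diagonal]
    exact congrArg _ (funext fun i => by rw [← RCLike.ofReal_mul, Real.mul_self_sqrt (hx i)])
  have hS : Sᴴ = S :=
    (isHermitian_diagonal_of_self_adjoint _ (funext fun _ => RCLike.conj_ofReal _)).eq
  have hdet : (1 + Q * diagonal fun i => (x i : 𝕜)).det = (1 + S * Q * S).det := by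
    rw [← hSS, ← Matrix.mul_assoc, det_one_add_mul_comm, Matrix.mul_assoc]
  have hM : (1 + S * Q * S).PosDef := by
    simpa only [hS] using PosDef.one.add_posSemidef (hQ.conjTranspose_mul_mul_same S)
  rw [hdet]
  refine ⟨(RCLike.pos_iff.1 hM.det_pos).1, hM.re_det_le_prod_re_diag.trans_eq ?_⟩
  refine Finset.prod_congr rfl fun i _ => ?_
  simp only [S, add_apply, one_apply_eq, diagonal_mul, mul_diagonal, map_add, RCLike.one_re]
  rw [mul_right_comm, ← RCLike.ofReal_mul, Real.mul_self_sqrt (hx i), RCLike.re_ofReal_mul]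

theorem det_one_add_mul_mul_mul_comm {R : Type*} [CommRing R] (M A N B : Matrix n n R) :
    (1 + M * (A * N * B)).det = (1 + B * M * A * N).det := by
  rw [← Matrix.mul_assoc, ← Matrix.mul_assoc, det_one_add_mul_comm]
  simp only [Matrix.mul_assoc]

end Matrix

noncomputable def waterFilling (μ x : ℝ) : ℝ := max (μ - 1 / x) 0

theorem waterFilling_nonneg (μ x : ℝ) : 0 ≤ waterFilling μ x := le_max_right _ _

theorem waterFilling_of_nonpos {μ x : ℝ} (hμ : μ ≤ 0) (hx : 0 < x) : waterFilling μ x = 0 :=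
  max_eq_right (by have := one_div_pos.2 hx; linarith)

theorem log_one_add_mul_le_log_one_add_mul_waterFilling {μ x t : ℝ} (hμ : 0 < μ) (hx : 0 < x)
    (ht : 0 ≤ t) :
    Real.log (1 + x * t) ≤
      Real.log (1 + x * waterFilling μ x) + (t - waterFilling μ x) / μ := by
  set q := waterFilling μ x
  have hc : 0 < 1 + x * q := by have := waterFilling_nonneg μ x; positivity
  have hslope : x * (t - q) / (1 + x * q) ≤ (t - q) / μ := by
    rcases le_or_gt μ (1 / x) with h | h
    · have hq : q = 0 := max_eq_right (by linarith)
      have hxμ : x * μ ≤ 1 := by rwa [le_div_iff₀ hx, mul_comm] at h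
      rw [hq, sub_zero, mul_zero, add_zero, div_one, le_div_iff₀ hμ]
      nlinarith
    · have hq : q = μ - 1 / x := max_eq_left (by linarith)
      have hxq : 1 + x * q = x * μ := by rw [hq]; field_simp; ring
      rw [hxq, mul_div_mul_left _ _ hx.ne']
  calc Real.log (1 + x * t)
      = Real.log (1 + x * q) + Real.log ((1 + x * t) / (1 + x * q)) := by
        rw [Real.log_div (by positivity) hc.ne', add_sub_cancel]
    _ ≤ Real.log (1 + x * q) + ((1 + x * t) / (1 + x * q) - 1) := by
        gcongr
        exact Real.log_le_sub_one_of_pos (by positivity)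
    _ = Real.log (1 + x * q) + x * (t - q) / (1 + x * q) := by
        field_simp
        ring
    _ ≤ Real.log (1 + x * q) + (t - q) / μ := by gcongr

theorem prod_one_add_mul_le_prod_one_add_mul_waterFilling {ι : Type*} [Fintype ι]
    {x t : ι → ℝ} (hx : ∀ i, 0 < x i) (ht : ∀ i, 0 ≤ t i) {μ : ℝ}
    (hsum : ∑ i, t i ≤ ∑ i, waterFilling μ (x i)) :
    ∏ i, (1 + x i * t i) ≤ ∏ i, (1 + x i * waterFilling μ (x i)) := by
  rcases le_or_gt μ 0 with hμ | hμ
  · have hq : ∀ i, waterFilling μ (x i) = 0 := fun i => waterFilling_of_nonpos hμ (hx i)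
    simp only [hq, Finset.sum_const_zero] at hsum
    have ht0 : ∀ i, t i = 0 := fun i =>
      (Finset.sum_eq_zero_iff_of_nonneg fun i _ => ht i).1
        (le_antisymm hsum (Finset.sum_nonneg fun i _ => ht i)) i (Finset.mem_univ i)
    simp only [hq, ht0, mul_zero, le_refl]
  · set q : ι → ℝ := fun i => waterFilling μ (x i)
    have hfac : ∀ s : ι → ℝ, (∀ i, 0 ≤ s i) → ∀ i, 0 < 1 + x i * s i := fun s hs i => by
      have := hs i; have := hx i; positivity
    have hq := hfac q fun i => waterFilling_nonneg μ (x i)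
    rw [← Real.log_le_log_iff (Finset.prod_pos fun i _ => hfac t ht i)
      (Finset.prod_pos fun i _ => hq i), Real.log_prod fun i _ => (hfac t ht i).ne',
      Real.log_prod fun i _ => (hq i).ne']
    calc ∑ i, Real.log (1 + x i * t i)
        ≤ ∑ i, (Real.log (1 + x i * q i) + (t i - q i) / μ) := Finset.sum_le_sum fun i _ =>
          log_one_add_mul_le_log_one_add_mul_waterFilling hμ (hx i) (ht i)
      _ = ∑ i, Real.log (1 + x i * q i) + (∑ i, t i - ∑ i, q i) / μ := by
          rw [Finset.sum_add_distrib, ← Finset.sum_div, Finset.sum_sub_distrib]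
      _ ≤ ∑ i, Real.log (1 + x i * q i) := by
          have := div_nonpos_of_nonpos_of_nonneg (sub_nonpos.2 hsum) hμ.le
          linarith

theorem stmt_9_general {n : ℕ} (T U Λ : Matrix (Fin n) (Fin n) ℂ)
    (hU : U ∈ Matrix.unitaryGroup (Fin n) ℂ) (lam : Fin n → ℝ) (hlam : ∀ i, 0 < lam i)
    (hΛ : Λ = Matrix.diagonal fun i => (lam i : ℂ)) (hdecomp : T = U * Λ * Uᴴ)
    (a P μ : ℝ) (ha : 0 < a)
    (hμ : ∑ i, max (μ - 1 / (a * lam i)) 0 = n * P)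
    (Qstar : Matrix (Fin n) (Fin n) ℂ)
    (hQstar : Qstar = U * Matrix.diagonal (fun i => ((max (μ - 1 / (a * lam i)) 0 : ℝ) : ℂ)) * Uᴴ) :
    ∀ Q : Matrix (Fin n) (Fin n) ℂ, Q.PosSemidef → (Matrix.trace Q).re ≤ n * P →
      Real.log (((1 : Matrix (Fin n) (Fin n) ℂ) + (a : ℂ) • (Q * T)).det.re) ≤
      Real.log (((1 : Matrix (Fin n) (Fin n) ℂ) + (a : ℂ) • (Qstar * T)).det.re) := by
  intro Q hQ htr
  set x : Fin n → ℝ := fun i => a * lam i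
  have hx : ∀ i, 0 < x i := fun i => mul_pos ha (hlam i)
  have hUU : Uᴴ * U = 1 := by simpa [star_eq_conjTranspose] using hU.1
  have hdet : ∀ M : Matrix (Fin n) (Fin n) ℂ,
      ((1 : Matrix (Fin n) (Fin n) ℂ) + (a : ℂ) • (M * T)).det =
        (1 + Uᴴ * M * U * diagonal fun i => (x i : ℂ)).det := fun M => by
    have hD : (a : ℂ) • diagonal (fun i => (lam i : ℂ)) = diagonal fun i => (x i : ℂ) := by
      rw [← diagonal_smul]
      exact congrArg _ (funext fun i => by simp [x])
    rw [← mul_smul_comm, hdecomp, hΛ, ← Matrix.smul_mul, ← Matrix.mul_smul, hD,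
      det_one_add_mul_mul_mul_comm]
  have hconj : Uᴴ * Qstar * U = diagonal fun i => (waterFilling μ (x i) : ℂ) := by
    rw [hQstar, ← Matrix.mul_assoc, ← Matrix.mul_assoc, hUU, Matrix.one_mul, Matrix.mul_assoc,
      hUU, Matrix.mul_one]
    rfl
  have hopt : (1 + Uᴴ * Qstar * U * diagonal fun i => (x i : ℂ)).det
      = ((∏ i, (1 + x i * waterFilling μ (x i)) : ℝ) : ℂ) := by
    rw [hconj, diagonal_mul_diagonal, ← diagonal_one, diagonal_add, det_diagonal]
    push_cast
    exact Finset.prod_congr rfl fun i _ => by ring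
  have htrace : ∑ i, ((Uᴴ * Q * U) i i).re ≤ ∑ i, waterFilling μ (x i) := by
    have hUU' : U * Uᴴ = 1 := by simpa [star_eq_conjTranspose] using hU.2
    calc ∑ i, ((Uᴴ * Q * U) i i).re = (Uᴴ * Q * U).trace.re := by simp [trace, Complex.re_sum]
      _ = Q.trace.re := by rw [trace_mul_cycle, hUU', Matrix.one_mul]
      _ ≤ _ := htr.trans_eq hμ.symm
  have hQ' : (Uᴴ * Q * U).PosSemidef := hQ.conjTranspose_mul_mul_same U
  obtain ⟨hpos, hle⟩ := hQ'.re_det_one_add_mul_diagonal fun i => (hx i).le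
  rw [hdet, hdet, hopt, Complex.ofReal_re]
  exact Real.log_le_log hpos (hle.trans (prod_one_add_mul_le_prod_one_add_mul_waterFilling hx
    (fun i => (RCLike.nonneg_iff.1 hQ'.diag_nonneg).1) htrace))

/-- Water-filling optimality for maximizing log det(I + a·Q·T) under a trace constraint. -/
theorem stmt_9 {n : ℕ} (hn : 0 < n) (T U Λ : Matrix (Fin n) (Fin n) ℂ) (hT : T.PosDef)
    (hU : U ∈ Matrix.unitaryGroup (Fin n) ℂ) (lam : Fin n → ℝ) (hlam : ∀ i, 0 < lam i)
    (hΛ : Λ = Matrix.diagonal fun i => (lam i : ℂ)) (hdecomp : T = U * Λ * Uᴴ)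
    (a P μ : ℝ) (ha : 0 < a) (hP : 0 < P)
    (hμ : ∑ i, max (μ - 1 / (a * lam i)) 0 = n * P)
    (Qstar : Matrix (Fin n) (Fin n) ℂ)
    (hQstar : Qstar = U * Matrix.diagonal (fun i => ((max (μ - 1 / (a * lam i)) 0 : ℝ) : ℂ)) * Uᴴ) :
    ∀ Q : Matrix (Fin n) (Fin n) ℂ, Q.PosSemidef → (Matrix.trace Q).re ≤ n * P →
      Real.log (((1 : Matrix (Fin n) (Fin n) ℂ) + (a : ℂ) • (Q * T)).det.re) ≤
      Real.log (((1 : Matrix (Fin n) (Fin n) ℂ) + (a : ℂ) • (Qstar * T)).det.re) :=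
  stmt_9_general T U Λ hU lam hlam hΛ hdecomp a P μ ha hμ Qstar hQstar
end

section
/- Contraction estimate for the coupled fixed point: let R₁ be Hermitian PSD with ‖R₁‖ ≤ K, and for z < 0 and nonnegative reals ᾱ, ᾱ' define δ₁(ᾱ) = (1/n)Tr(R₁(−zI + ᾱR₁)^{-1}). Then |δ₁(ᾱ) − δ₁(ᾱ')| ≤ (K²/z²)|ᾱ − ᾱ'|; in particular for |z| > K² the map is a strict contraction and the fixed point equation ᾱ = δ₁(ᾱ) has a unique nonnegative solution obtainable by iteration from ᾱ⁰ = 1/|z|. -/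
open Matrix MeasureTheory Filter
open scoped ComplexOrder Matrix.Norms.L2Operator

private lemma aux_cross (z r K a μi : ℝ) (hz : z < 0) (hμK : μi ≤ K) (hμ0 : 0 ≤ μi)
    (hr : 0 ≤ r) (hra : r ≤ a) (hK0 : 0 ≤ K) :
    μi * (-z + r * K) ≤ K * (-z + a * μi) := by
  have t1 : μi * (-z) ≤ K * (-z) := mul_le_mul_of_nonneg_right hμK (by linarith)
  have t2 : r * μi * K ≤ a * μi * K :=
    mul_le_mul_of_nonneg_right (mul_le_mul_of_nonneg_right hra hμ0) hK0
  nlinarith [t1, t2]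

/-- Contraction estimate for the fixed-point map and convergence of the iteration. -/
theorem stmt_16 {n : ℕ} (hn : 0 < n) (R₁ : Matrix (Fin n) (Fin n) ℂ) (hR : R₁.PosSemidef)
    (K : ℝ) (hK : ‖R₁‖ ≤ K) (z : ℝ) (hz : z < 0)
    (f : ℝ → ℝ)
    (hf : ∀ α : ℝ, f α = ((1 / (n : ℂ)) * Matrix.trace
      (R₁ * ((-z : ℂ) • (1 : Matrix (Fin n) (Fin n) ℂ) + (α : ℂ) • R₁)⁻¹)).re) :
    (∀ α α' : ℝ, 0 ≤ α → 0 ≤ α' → |f α - f α'| ≤ K ^ 2 / z ^ 2 * |α - α'|) ∧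
    (K ^ 2 < |z| → ∃ α₀ : ℝ, 0 ≤ α₀ ∧ α₀ = f α₀ ∧
      (∀ β : ℝ, 0 ≤ β → β = f β → β = α₀) ∧
      Filter.Tendsto (fun k : ℕ => f^[k] (1 / |z|)) Filter.atTop (nhds α₀)) := by
  have hnR : (0:ℝ) < n := by exact_mod_cast hn
  have hz2 : (0:ℝ) < z ^ 2 := by nlinarith
  set μ := hR.1.eigenvalues with hμdef
  have hμ0 : ∀ i, 0 ≤ μ i := hR.eigenvalues_nonneg
  have hμK : ∀ i, μ i ≤ K := by
    intro i
    have : Nonempty (Fin n) := Fin.pos_iff_nonempty.mp hn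
    have h := hR.1.eigenvalues_mem_spectrum_real i
    have h2 := spectrum.norm_le_norm_of_mem h
    have : |μ i| ≤ ‖R₁‖ := by simpa using h2
    exact le_trans (le_trans (le_abs_self _) this) hK
  have hK0 : 0 ≤ K := le_trans (norm_nonneg _) hK
  set g : ℝ → ℝ := fun α => (1/n) * ∑ i, μ i / (-z + α * μ i) with hg
  -- denominators positive
  have hd : ∀ (α : ℝ), 0 ≤ α → ∀ i, (0:ℝ) < -z + α * μ i := by
    intro α hα i
    have := hμ0 i
    nlinarith
  -- f = g on nonnegative reals
  have hfg : ∀ α : ℝ, 0 ≤ α → f α = g α := by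
    intro α hα
    set U : Matrix (Fin n) (Fin n) ℂ := (hR.1.eigenvectorUnitary : Matrix (Fin n) (Fin n) ℂ)
      with hU
    have hUU : U * star U = 1 := Matrix.mem_unitaryGroup_iff.mp hR.1.eigenvectorUnitary.2
    have hUU' : star U * U = 1 := Matrix.mem_unitaryGroup_iff'.mp hR.1.eigenvectorUnitary.2
    have conj : ∀ A B : Matrix (Fin n) (Fin n) ℂ,
        (U * A * star U) * (U * B * star U) = U * (A * B) * star U := by
      intro A B
      have h1 : star U * (U * (B * star U)) = B * star U := by
        rw [← Matrix.mul_assoc, hUU', Matrix.one_mul]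
      simp only [Matrix.mul_assoc, h1]
    have trace_conj : ∀ A : Matrix (Fin n) (Fin n) ℂ,
        (U * A * star U).trace = A.trace := by
      intro A
      rw [Matrix.trace_mul_cycle, hUU', Matrix.one_mul]
    have hspec : R₁ = U * diagonal (fun i => (μ i : ℂ)) * star U := by
      have := hR.1.spectral_theorem
      rw [Unitary.conjStarAlgAut_apply] at this
      exact this
    have key : (-z : ℂ) • (1 : Matrix (Fin n) (Fin n) ℂ) + (α : ℂ) • R₁
        = U * diagonal (fun i => ((-z + α * μ i : ℝ) : ℂ)) * star U := by
      have e1 : (-z : ℂ) • (1 : Matrix (Fin n) (Fin n) ℂ)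
          = U * ((-z : ℂ) • (1 : Matrix (Fin n) (Fin n) ℂ)) * star U := by
        rw [Matrix.mul_smul, Matrix.mul_one, Matrix.smul_mul, hUU]
      have e2 : (α : ℂ) • R₁ = U * ((α : ℂ) • diagonal (fun i => (μ i : ℂ))) * star U := by
        rw [Matrix.mul_smul, Matrix.smul_mul, ← hspec]
      rw [e1, e2, ← Matrix.add_mul, ← Matrix.mul_add]
      congr 2
      ext i j
      by_cases h : i = j <;>
        simp [h, Matrix.one_apply, Matrix.diagonal_apply] <;> push_cast <;> ring
    have hinv : ((-z : ℂ) • (1 : Matrix (Fin n) (Fin n) ℂ) + (α : ℂ) • R₁)⁻¹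
        = U * diagonal (fun i => (((-z + α * μ i : ℝ) : ℂ))⁻¹) * star U := by
      rw [key]
      apply Matrix.inv_eq_right_inv
      rw [conj, diagonal_mul_diagonal]
      rw [show (fun i => ((-z + α * μ i : ℝ) : ℂ) * (((-z + α * μ i : ℝ) : ℂ))⁻¹)
          = fun _ => (1:ℂ) by
        funext i
        exact mul_inv_cancel₀ (by exact_mod_cast (hd α hα i).ne')]
      rw [diagonal_one, Matrix.mul_one, hUU]
    have htr : Matrix.trace (R₁ * ((-z : ℂ) • (1 : Matrix (Fin n) (Fin n) ℂ) + (α : ℂ) • R₁)⁻¹)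
        = ∑ i, (μ i : ℂ) * (((-z + α * μ i : ℝ) : ℂ))⁻¹ := by
      rw [hinv]
      conv_lhs => rw [hspec]
      rw [conj, trace_conj, diagonal_mul_diagonal, trace_diagonal]
    rw [hf, htr]
    have : (1 / (n : ℂ)) * ∑ i, (μ i : ℂ) * (((-z + α * μ i : ℝ) : ℂ))⁻¹
        = (((1/n) * ∑ i, μ i / (-z + α * μ i) : ℝ) : ℂ) := by
      push_cast [Finset.mul_sum]
      exact Finset.sum_congr rfl fun i _ => by ring
    rw [this, Complex.ofReal_re, hg]
  -- difference formula
  have hdiff : ∀ a b : ℝ, 0 ≤ a → 0 ≤ b →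
      g a - g b = (1/n) * ∑ i, μ i * μ i * (b - a) / ((-z + a * μ i) * (-z + b * μ i)) := by
    intro a b ha hb
    rw [hg]
    simp only
    rw [← mul_sub, ← Finset.sum_sub_distrib]
    congr 1
    refine Finset.sum_congr rfl fun i _ => ?_
    rw [div_sub_div _ _ (hd a ha i).ne' (hd b hb i).ne']
    congr 1
    ring
  -- Lipschitz estimate for g
  have lip : ∀ a b : ℝ, 0 ≤ a → 0 ≤ b → |g a - g b| ≤ K ^ 2 / z ^ 2 * |a - b| := by
    intro a b ha hb
    rw [hdiff a b ha hb, abs_mul]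
    have h1 : |(1:ℝ)/n| = 1/n := abs_of_pos (by positivity)
    rw [h1]
    have h2 : |∑ i, μ i * μ i * (b - a) / ((-z + a * μ i) * (-z + b * μ i))|
        ≤ ∑ i : Fin n, K ^ 2 / z ^ 2 * |a - b| := by
      refine le_trans (Finset.abs_sum_le_sum_abs _ _) (Finset.sum_le_sum fun i _ => ?_)
      rw [abs_div, abs_of_pos (mul_pos (hd a ha i) (hd b hb i))]
      have hnum : |μ i * μ i * (b - a)| ≤ K ^ 2 * |a - b| := by
        rw [abs_mul, abs_of_nonneg (mul_nonneg (hμ0 i) (hμ0 i)), abs_sub_comm]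
        have : μ i * μ i ≤ K ^ 2 := by nlinarith [hμ0 i, hμK i]
        exact mul_le_mul_of_nonneg_right this (abs_nonneg _) |>.trans_eq rfl
      have hden : z ^ 2 ≤ (-z + a * μ i) * (-z + b * μ i) := by
        nlinarith [mul_nonneg ha (hμ0 i), mul_nonneg hb (hμ0 i),
          mul_nonneg (mul_nonneg ha (hμ0 i)) (mul_nonneg hb (hμ0 i))]
      calc |μ i * μ i * (b - a)| / ((-z + a * μ i) * (-z + b * μ i))
          ≤ (K ^ 2 * |a - b|) / z ^ 2 :=
            div_le_div₀ (by positivity) hnum hz2 hden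
        _ = K ^ 2 / z ^ 2 * |a - b| := by ring
    calc (1/(n:ℝ)) * |∑ i, μ i * μ i * (b - a) / ((-z + a * μ i) * (-z + b * μ i))|
        ≤ (1/n) * ∑ i : Fin n, K ^ 2 / z ^ 2 * |a - b| := by
          exact mul_le_mul_of_nonneg_left h2 (by positivity)
      _ = (1/n) * (n * (K ^ 2 / z ^ 2 * |a - b|)) := by
          rw [Finset.sum_const, Finset.card_univ, Fintype.card_fin, nsmul_eq_mul]
      _ = K ^ 2 / z ^ 2 * |a - b| := by
          field_simp
  -- g is antitone on nonnegatives
  have hanti : ∀ a b : ℝ, 0 ≤ a → a ≤ b → g b ≤ g a := by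
    intro a b ha hab
    rw [hg]
    simp only
    refine mul_le_mul_of_nonneg_left (Finset.sum_le_sum fun i _ => ?_) (by positivity)
    have h1 := hd a ha i
    have h2 := hμ0 i
    gcongr
  -- g nonneg on nonnegatives
  have hg0 : ∀ a : ℝ, 0 ≤ a → 0 ≤ g a := by
    intro a ha
    rw [hg]
    refine mul_nonneg (by positivity) (Finset.sum_nonneg fun i _ => div_nonneg (hμ0 i) ?_)
    exact (hd a ha i).le
  -- continuity of g at nonneg points
  have hcont : ∀ b : ℝ, 0 ≤ b → ContinuousAt g b := by
    intro b hb
    rw [hg]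
    refine ContinuousAt.mul continuousAt_const ?_
    refine tendsto_finset_sum _ fun i _ => ?_
    exact ContinuousAt.div continuousAt_const
      (continuousAt_const.add (continuousAt_id.mul continuousAt_const)) (hd b hb i).ne'
  refine ⟨fun α α' hα hα' => by rw [hfg α hα, hfg α' hα']; exact lip α α' hα hα', fun _ => ?_⟩
  -- Part 2: dynamics
  set x₀ : ℝ := 1 / |z| with hx₀def
  have hx₀ : 0 ≤ x₀ := by positivity
  set y : ℕ → ℝ := fun k => f^[k] x₀ with hy
  have hy0 : ∀ k, 0 ≤ y k := by
    intro k
    induction k with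
    | zero => exact hx₀
    | succ k ih =>
      have : y (k+1) = f (y k) := by rw [hy]; exact Function.iterate_succ_apply' f k x₀
      rw [this, hfg _ ih]
      exact hg0 _ ih
  have hysucc : ∀ k, y (k+1) = g (y k) := by
    intro k
    have : y (k+1) = f (y k) := by rw [hy]; exact Function.iterate_succ_apply' f k x₀
    rw [this, hfg _ (hy0 k)]
  have hyC : ∀ k, y k ≤ max x₀ (g 0) := by
    intro k
    cases k with
    | zero => exact le_max_left _ _
    | succ k => rw [hysucc]; exact le_trans (hanti 0 (y k) le_rfl (hy0 k)) (le_max_right _ _)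
  set e : ℕ → ℝ := fun k => y (2*k) with he
  have he2 : ∀ k, e (k+1) = g (g (e k)) := by
    intro k
    have h1 : 2*(k+1) = (2*k+1)+1 := by ring
    rw [he]
    simp only
    rw [h1, hysucc, hysucc]
  have hgg : ∀ a b : ℝ, 0 ≤ a → a ≤ b → g (g a) ≤ g (g b) := by
    intro a b ha hab
    exact hanti (g b) (g a) (hg0 b (ha.trans hab)) (hanti a b ha hab)
  have hebddA : BddAbove (Set.range e) := by
    refine ⟨max x₀ (g 0), ?_⟩
    rintro _ ⟨k, rfl⟩
    exact hyC _
  have hebddB : BddBelow (Set.range e) := by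
    refine ⟨0, ?_⟩
    rintro _ ⟨k, rfl⟩
    exact hy0 _
  obtain ⟨p, hp⟩ : ∃ p, Tendsto e atTop (nhds p) := by
    rcases le_total (e 0) (e 1) with h01 | h01
    · have hmono : Monotone e := by
        refine monotone_nat_of_le_succ ?_
        intro k
        induction k with
        | zero => exact h01
        | succ k ih => rw [he2 k, he2 (k+1)]; exact hgg _ _ (hy0 _) ih
      exact ⟨_, tendsto_atTop_ciSup hmono hebddA⟩
    · have hmono : Antitone e := by
        refine antitone_nat_of_succ_le ?_
        intro k
        induction k with
        | zero => exact h01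
        | succ k ih => rw [he2 k, he2 (k+1)]; exact hgg _ _ (hy0 _) ih
      exact ⟨_, tendsto_atTop_ciInf hmono hebddB⟩
  have hp0 : 0 ≤ p := ge_of_tendsto hp (Filter.Eventually.of_forall fun k => hy0 _)
  obtain ⟨q, hq⟩ : ∃ q : ℝ, q = g p := ⟨g p, rfl⟩
  have hq0 : 0 ≤ q := by rw [hq]; exact hg0 p hp0
  have hoeq : (fun k => y (2*k+1)) = fun k => g (e k) := by
    funext k
    exact hysucc (2*k)
  have ho : Tendsto (fun k => y (2*k+1)) atTop (nhds q) := by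
    rw [hoeq, hq]
    exact (hcont p hp0).tendsto.comp hp
  have hpgq : p = g q := by
    have h1 : Tendsto (fun k => e (k+1)) atTop (nhds p) :=
      hp.comp (tendsto_add_atTop_nat 1)
    have h2 : (fun k => e (k+1)) = fun k => g (y (2*k+1)) := by
      funext k
      have : 2*(k+1) = (2*k+1)+1 := by ring
      rw [he]
      simp only
      rw [this, hysucc]
    have h3 : Tendsto (fun k => e (k+1)) atTop (nhds (g q)) := by
      rw [h2]
      exact (hcont q hq0).tendsto.comp ho
    exact tendsto_nhds_unique h1 h3
  -- no 2-cycle: p = q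
  have hpq : p = q := by
    by_contra hne
    -- cycle identity
    have hiden : q - p = (1/n) * ∑ i, μ i * μ i * (q - p) / ((-z + p * μ i) * (-z + q * μ i)) := by
      have := hdiff p q hp0 hq0
      rw [← hq, ← hpgq] at this
      linarith [this]
    obtain ⟨S, hS⟩ : ∃ S : ℝ, S = (1/n) * ∑ i, μ i * μ i / ((-z + p * μ i) * (-z + q * μ i)) :=
      ⟨_, rfl⟩
    have hre : ∀ i : Fin n, μ i * μ i * (q - p) / ((-z + p * μ i) * (-z + q * μ i))
        = μ i * μ i / ((-z + p * μ i) * (-z + q * μ i)) * (q - p) := fun i => by ring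
    have hiden2 : q - p = S * (q - p) := by
      calc q - p = (1/n) * ∑ i, μ i * μ i * (q - p) / ((-z + p * μ i) * (-z + q * μ i)) := hiden
        _ = S * (q - p) := by
            rw [hS, Finset.sum_congr rfl fun i _ => hre i, ← Finset.sum_mul]
            ring
    have hqp : q - p ≠ 0 := sub_ne_zero.mpr fun h => hne h.symm
    have hS1 : S = 1 := by
      have h2 : S * (q - p) = 1 * (q - p) := by rw [← hiden2, one_mul]
      exact mul_right_cancel₀ hqp h2
    -- K must be positive
    have hKpos : 0 < K := by
      rcases lt_or_eq_of_le hK0 with h | h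
      · exact h
      · exfalso
        have hμz : ∀ i, μ i = 0 := fun i => le_antisymm (h ▸ hμK i) (hμ0 i)
        have : S = 0 := by
          rw [hS]
          simp [hμz]
        rw [this] at hS1
        norm_num at hS1
    -- bootstrap
    have boot : ∀ r : ℝ, 0 ≤ r → r ≤ p → r ≤ q → (-z)/K + r ≤ p ∧ (-z)/K + r ≤ q := by
      intro r hr hrp hrq
      have hdenr : (0:ℝ) < -z + r * K := by
        have := mul_nonneg hr hK0
        linarith
      have key : ∀ (a b : ℝ), 0 ≤ a → r ≤ a → 0 ≤ b → 1 ≤ K / (-z + r * K) * g b →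
          (-z)/K + r ≤ g b → True := fun _ _ _ _ _ _ _ => trivial
      -- 1 ≤ K/(-z+rK) * g b whenever S' with the other var ≥ r equals 1
      have main : ∀ a b : ℝ, 0 ≤ a → 0 ≤ b → r ≤ a →
          (1/n) * (∑ i, μ i * μ i / ((-z + a * μ i) * (-z + b * μ i))) = 1 →
          1 ≤ K / (-z + r * K) * g b := by
        intro a b ha hb hra hsum
        have hterm : ∀ i, μ i * μ i / ((-z + a * μ i) * (-z + b * μ i))
            ≤ K / (-z + r * K) * (μ i / (-z + b * μ i)) := by
          intro i
          have hda := hd a ha i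
          have hdb := hd b hb i
          have h1 : μ i / (-z + a * μ i) ≤ K / (-z + r * K) := by
            rw [div_le_div_iff₀ hda hdenr]
            exact aux_cross z r K a (μ i) hz (hμK i) (hμ0 i) hr hra hK0
          calc μ i * μ i / ((-z + a * μ i) * (-z + b * μ i))
              = (μ i / (-z + a * μ i)) * (μ i / (-z + b * μ i)) :=
                (div_mul_div_comm _ _ _ _).symm
            _ ≤ K / (-z + r * K) * (μ i / (-z + b * μ i)) :=
                mul_le_mul_of_nonneg_right h1 (div_nonneg (hμ0 i) hdb.le)
        calc (1:ℝ) = (1/n) * (∑ i, μ i * μ i / ((-z + a * μ i) * (-z + b * μ i))) := hsum.symm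
          _ ≤ (1/n) * ∑ i, K / (-z + r * K) * (μ i / (-z + b * μ i)) :=
              mul_le_mul_of_nonneg_left (Finset.sum_le_sum fun i _ => hterm i) (by positivity)
          _ = K / (-z + r * K) * ((1/n) * ∑ i, μ i / (-z + b * μ i)) := by
              rw [← Finset.mul_sum]; ring
          _ = K / (-z + r * K) * g b := by simp only [hg]
      have hsum1 : (1/n) * (∑ i, μ i * μ i / ((-z + p * μ i) * (-z + q * μ i))) = 1 := by
        rw [← hS]; exact hS1
      have hsum2 : (1/n) * (∑ i, μ i * μ i / ((-z + q * μ i) * (-z + p * μ i))) = 1 := by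
        have hswap : (∑ i, μ i * μ i / ((-z + q * μ i) * (-z + p * μ i)))
            = ∑ i, μ i * μ i / ((-z + p * μ i) * (-z + q * μ i)) :=
          Finset.sum_congr rfl fun i _ => by rw [mul_comm (-z + q * μ i)]
        rw [hswap]
        exact hsum1
      have hp' : 1 ≤ K / (-z + r * K) * g q := main p q hp0 hq0 hrp hsum1
      have hq' : 1 ≤ K / (-z + r * K) * g p := main q p hq0 hp0 hrq hsum2
      rw [← hpgq] at hp'
      rw [← hq] at hq'
      have hsplit : (-z)/K + r = (-z + r * K)/K := by field_simp
      constructor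
      · -- from hp' : 1 ≤ K/(-z+rK) * p
        rw [div_mul_eq_mul_div, le_div_iff₀ hdenr, one_mul] at hp'
        rw [hsplit, div_le_iff₀ hKpos, mul_comm]
        linarith
      · rw [div_mul_eq_mul_div, le_div_iff₀ hdenr, one_mul] at hq'
        rw [hsplit, div_le_iff₀ hKpos, mul_comm]
        linarith
    have steps : ∀ m : ℕ, (m : ℝ) * ((-z)/K) ≤ p ∧ (m : ℝ) * ((-z)/K) ≤ q := by
      intro m
      induction m with
      | zero => simpa using ⟨hp0, hq0⟩
      | succ m ih =>
        have hzKnn : 0 ≤ (-z)/K := div_nonneg (by linarith) hK0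
        have hr : 0 ≤ (m:ℝ) * ((-z)/K) := mul_nonneg (Nat.cast_nonneg m) hzKnn
        have hb := boot _ hr ih.1 ih.2
        have hcast : ((m+1 : ℕ) : ℝ) * ((-z)/K) = (-z)/K + (m:ℝ) * ((-z)/K) := by
          push_cast; ring
        exact ⟨hcast ▸ hb.1, hcast ▸ hb.2⟩
    obtain ⟨m, hm⟩ := exists_nat_gt (p / ((-z)/K))
    have hzK : (0:ℝ) < (-z)/K := div_pos (by linarith) hKpos
    have : p < (m:ℝ) * ((-z)/K) := by
      rw [div_lt_iff₀ hzK] at hm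
      linarith
    linarith [(steps m).1]
  have hfix : p = g p := by rw [← hq, ← hpq]
  refine ⟨p, hp0, ?_, ?_, ?_⟩
  · rw [hfg p hp0]; exact hfix
  · intro β hβ hβfix
    have hβg : β = g β := by rw [← hfg β hβ]; exact hβfix
    rcases le_total β p with h | h
    · have := hanti β p hβ h
      rw [← hβg, ← hfix] at this
      linarith
    · have := hanti p β hp0 h
      rw [← hβg, ← hfix] at this
      linarith
  · -- combine even and odd subsequences
    rw [← hpq] at ho
    show Tendsto y atTop (nhds p)
    rw [Metric.tendsto_atTop] at hp ho ⊢
    intro ε hε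
    obtain ⟨N₁, h₁⟩ := hp ε hε
    obtain ⟨N₂, h₂⟩ := ho ε hε
    refine ⟨2*(N₁+N₂)+2, fun k hk => ?_⟩
    rcases Nat.even_or_odd k with ⟨m, hm⟩ | ⟨m, hm⟩
    · have hk' : k = 2*m := by omega
      have : y k = e m := by rw [he]; simp only; rw [hk']
      rw [this]
      exact h₁ m (by omega)
    · have hk' : k = 2*m+1 := by omega
      have : y k = y (2*m+1) := by rw [hk']
      rw [this]
      exact h₂ m (by omega)
end

section
/- Monotone saturation of the rate in dynamic-noise level: for fixed H₁, H₂, Q ⪰ 0 and σ_s² > 0, the function σ_d² ↦ log det((1/σ_s²)H₁H₂QH₂ᴴH₁ᴴ + (σ_d²/σ_s²)H₁H₁ᴴ + I) − log det((σ_d²/σ_s²)H₁H₁ᴴ + I) is nonincreasing in σ_d² ∈ [0,∞) and is bounded above by its value at σ_d² = 0, namely log det(I + (1/σ_s²)H₁H₂QH₂ᴴH₁ᴴ). -/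
/-!
Put `A = σ_s⁻² H₁H₂QH₂ᴴH₁ᴴ ⪰ 0` and `M = (σ_d²/σ_s²) H₁H₁ᴴ + I ≻ 0`; the rate is
`log det (A + M) - log det M`, and raising `σ_d²` adds a positive semidefinite `D` to `M`.
So it suffices that `det (A + M + D) · det M ≤ det (A + M) · det (M + D)`. Writing `D = T²`,
Sylvester's identity gives `det (P + T²) = det P · det (I + T P⁻¹ T)` for invertible `P`, and
`(A + M)⁻¹ ≤ M⁻¹` in the Loewner order; hence `T (A + M)⁻¹ T ≤ T M⁻¹ T`, and `det` is monotone
on positive definite matrices.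
-/

open Matrix
open scoped ComplexOrder MatrixOrder

namespace Matrix

variable {n : Type*} [Fintype n] [DecidableEq n]

section RCLike

variable {𝕜 : Type*} [RCLike 𝕜]

theorem one_le_det_of_one_le {A : Matrix n n 𝕜} (h : 1 ≤ A) : 1 ≤ A.det := by
  have hA : A.IsHermitian := by simpa using (le_iff.mp h).isHermitian.add isHermitian_one
  have heig : ∀ i, 1 ≤ hA.eigenvalues i := fun i =>
    (algebraMap_le_iff_le_spectrum (r := (1 : ℝ)) (a := A) hA.isSelfAdjoint).mp
      (by simpa using h) _ (hA.eigenvalues_mem_spectrum_real i)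
  rw [hA.det_eq_prod_eigenvalues, ← RCLike.ofReal_prod, ← RCLike.ofReal_one,
    RCLike.ofReal_le_ofReal]
  exact Finset.one_le_prod fun i _ => heig i

/-- Congruence by `(√A)⁻¹` reduces monotonicity of `det` to the case `A = 1`. -/
theorem PosDef.det_le_det_of_le {A B : Matrix n n 𝕜} (hA : A.PosDef) (hAB : A ≤ B) :
    A.det ≤ B.det := by
  set S := CFC.sqrt A
  have hSS : S * S = A := CFC.sqrt_mul_sqrt_self A hA.posSemidef.nonneg
  have hS : IsUnit S.det := by
    rw [isUnit_iff_ne_zero]; intro h; simpa [← hSS, h] using hA.det_pos.ne'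
  have hSinv : star S⁻¹ = S⁻¹ := by
    rw [star_eq_conjTranspose, conjTranspose_nonsing_inv, (CFC.sqrt_nonneg A).posSemidef.1]
  have hone : S⁻¹ * A * S⁻¹ = 1 := by
    rw [← hSS, ← Matrix.mul_assoc, nonsing_inv_mul _ hS, Matrix.one_mul, mul_nonsing_inv _ hS]
  have h1 : 1 ≤ (S⁻¹ * B * S⁻¹).det := by
    apply one_le_det_of_one_le
    rw [← hone]
    simpa [hSinv] using star_left_conjugate_le_conjugate hAB S⁻¹
  have hdet : A.det * (S⁻¹ * B * S⁻¹).det = B.det := by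
    rw [← hSS, det_mul, det_mul, det_mul, det_nonsing_inv, Ring.inverse_eq_inv']
    field_simp [hS.ne_zero]
  calc A.det = A.det * 1 := (mul_one _).symm
    _ ≤ A.det * (S⁻¹ * B * S⁻¹).det := mul_le_mul_of_nonneg_left h1 hA.det_pos.le
    _ = B.det := hdet

end RCLike

theorem det_add_mul_self {R : Type*} [CommRing R] {P : Matrix n n R} (T : Matrix n n R)
    (hP : IsUnit P.det) : (P + T * T).det = P.det * (1 + T * P⁻¹ * T).det := by
  have hfac : P + T * T = P * (1 + P⁻¹ * T * T) := by
    rw [Matrix.mul_add, Matrix.mul_one, ← Matrix.mul_assoc, ← Matrix.mul_assoc,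
      mul_nonsing_inv _ hP, Matrix.one_mul]
  rw [hfac, det_mul, det_one_add_mul_comm (P⁻¹ * T) T, Matrix.mul_assoc]

open scoped Matrix.Norms.L2Operator in
theorem PosDef.inv_le_inv {A B : Matrix n n ℂ} (hA : A.PosDef) (hAB : A ≤ B) : B⁻¹ ≤ A⁻¹ := by
  have : IsStrictlyPositive A := isStrictlyPositive_iff_posDef.mpr hA
  simpa only [nonsing_inv_eq_ringInverse] using CStarAlgebra.ringInverse_le_ringInverse hAB

theorem PosDef.det_add_add_mul_det_le {A M D : Matrix n n ℂ} (hA : A.PosSemidef) (hM : M.PosDef)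
    (hD : D.PosSemidef) : (A + M + D).det * M.det ≤ (A + M).det * (M + D).det := by
  set T := CFC.sqrt D
  have hTT : T * T = D := CFC.sqrt_mul_sqrt_self D hD.nonneg
  have hTH : Tᴴ = T := (CFC.sqrt_nonneg D).posSemidef.1
  have hAM : (A + M).PosDef := hM.posSemidef_add hA
  have hinv : (A + M)⁻¹ ≤ M⁻¹ := hM.inv_le_inv (le_add_of_nonneg_left hA.nonneg)
  have hpd : (1 + T * (A + M)⁻¹ * T).PosDef := by
    refine PosDef.one.add_posSemidef ?_
    simpa [hTH] using hAM.inv.posSemidef.mul_mul_conjTranspose_same T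
  have hle : 1 + T * (A + M)⁻¹ * T ≤ 1 + T * M⁻¹ * T := by
    gcongr
    simpa [star_eq_conjTranspose, hTH] using star_left_conjugate_le_conjugate hinv T
  calc (A + M + D).det * M.det = (A + M).det * (1 + T * (A + M)⁻¹ * T).det * M.det := by
        rw [← hTT, det_add_mul_self T (isUnit_iff_ne_zero.mpr hAM.det_pos.ne')]
    _ ≤ (A + M).det * (1 + T * M⁻¹ * T).det * M.det := by
        gcongr
        · exact hM.det_pos.le
        · exact hAM.det_pos.le
        · exact hpd.det_le_det_of_le hle
    _ = (A + M).det * (M + D).det := by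
        rw [← hTT, det_add_mul_self T (isUnit_iff_ne_zero.mpr hM.det_pos.ne')]
        ring

theorem PosDef.ofReal_re_det {P : Matrix n n ℂ} (hP : P.PosDef) : (P.det.re : ℂ) = P.det :=
  Complex.ext rfl (by simpa using (Complex.lt_def.mp hP.det_pos).2)

theorem PosDef.re_det_pos {P : Matrix n n ℂ} (hP : P.PosDef) : 0 < P.det.re := by
  simpa using (Complex.lt_def.mp hP.det_pos).1

theorem log_re_det_add_sub_le {A M D : Matrix n n ℂ} (hA : A.PosSemidef) (hM : M.PosDef)
    (hD : D.PosSemidef) :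
    Real.log (A + (M + D)).det.re - Real.log (M + D).det.re ≤
      Real.log (A + M).det.re - Real.log M.det.re := by
  have hMD : (M + D).PosDef := hM.add_posSemidef hD
  have hAMD : (A + (M + D)).PosDef := hMD.posSemidef_add hA
  have hAM : (A + M).PosDef := hM.posSemidef_add hA
  have key : (A + (M + D)).det.re * M.det.re ≤ (A + M).det.re * (M + D).det.re := by
    have h := hM.det_add_add_mul_det_le hA hD
    rw [add_assoc] at h
    rwa [← hAMD.ofReal_re_det, ← hM.ofReal_re_det, ← hAM.ofReal_re_det,
      ← hMD.ofReal_re_det, ← Complex.ofReal_mul, ← Complex.ofReal_mul, Complex.real_le_real] at h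
  have hlog := Real.log_le_log (mul_pos hAMD.re_det_pos hM.re_det_pos) key
  rw [Real.log_mul hAMD.re_det_pos.ne' hM.re_det_pos.ne',
    Real.log_mul hAM.re_det_pos.ne' hMD.re_det_pos.ne'] at hlog
  linarith

theorem antitoneOn_log_re_det_add_smul_sub {A B : Matrix n n ℂ} (hA : A.PosSemidef)
    (hB : B.PosSemidef) :
    AntitoneOn (fun x : ℝ => Real.log (A + (x : ℂ) • B + 1).det.re -
      Real.log ((x : ℂ) • B + 1).det.re) (Set.Ici 0) := by
  intro s hs t _ hst
  have hM : ((s : ℂ) • B + 1).PosDef :=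
    PosDef.one.posSemidef_add (hB.smul (Complex.zero_le_real.mpr hs))
  have hD : (((t - s : ℝ) : ℂ) • B).PosSemidef :=
    hB.smul (Complex.zero_le_real.mpr (sub_nonneg.mpr hst))
  have hMD : (t : ℂ) • B + 1 = (s : ℂ) • B + 1 + ((t - s : ℝ) : ℂ) • B := by
    rw [add_right_comm, ← add_smul]; push_cast; ring_nf
  simp only [add_assoc A]
  rw [hMD]
  exact log_re_det_add_sub_le hA hM hD

end Matrix

/-- The rate is nonincreasing in the dynamic-noise level and bounded by its value at 0. -/
theorem stmt_18 {nr nl nt : ℕ} (H₁ : Matrix (Fin nr) (Fin nl) ℂ) (H₂ : Matrix (Fin nl) (Fin nt) ℂ)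
    (Q : Matrix (Fin nt) (Fin nt) ℂ) (hQ : Q.PosSemidef) (σs2 : ℝ) (hs : 0 < σs2) :
    AntitoneOn (fun σd2 : ℝ =>
      Real.log (((σs2 : ℂ)⁻¹ • (H₁ * H₂ * Q * H₂ᴴ * H₁ᴴ) +
          ((σd2 / σs2 : ℝ) : ℂ) • (H₁ * H₁ᴴ) + 1).det.re)
        - Real.log ((((σd2 / σs2 : ℝ) : ℂ) • (H₁ * H₁ᴴ) + 1).det.re)) (Set.Ici 0) ∧
    ∀ σd2 : ℝ, 0 ≤ σd2 →
      Real.log (((σs2 : ℂ)⁻¹ • (H₁ * H₂ * Q * H₂ᴴ * H₁ᴴ) +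
          ((σd2 / σs2 : ℝ) : ℂ) • (H₁ * H₁ᴴ) + 1).det.re)
        - Real.log ((((σd2 / σs2 : ℝ) : ℂ) • (H₁ * H₁ᴴ) + 1).det.re) ≤
      Real.log (((1 : Matrix (Fin nr) (Fin nr) ℂ) +
        (σs2 : ℂ)⁻¹ • (H₁ * H₂ * Q * H₂ᴴ * H₁ᴴ)).det.re) := by
  have hG : (H₁ * H₂ * Q * H₂ᴴ * H₁ᴴ).PosSemidef := by
    simpa [conjTranspose_mul, Matrix.mul_assoc] using hQ.mul_mul_conjTranspose_same (H₁ * H₂)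
  have hA := hG.smul (inv_nonneg.mpr (Complex.zero_le_real.mpr hs.le))
  have hanti := (antitoneOn_log_re_det_add_smul_sub hA
    (posSemidef_self_mul_conjTranspose H₁)).comp_MonotoneOn
    (fun x _ y _ hxy => div_le_div_of_nonneg_right hxy hs.le)
    (fun x hx => Set.mem_Ici.mpr (div_nonneg hx hs.le))
  refine ⟨hanti, fun σd2 hσ => ?_⟩
  have h0 := hanti Set.self_mem_Ici hσ hσ
  simp only [Function.comp_apply, zero_div, Complex.ofReal_zero, zero_smul, add_zero, zero_add,
    det_one, Complex.one_re, Real.log_one, sub_zero] at h0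
  rwa [add_comm 1]
end

section
/- For Hermitian positive semidefinite matrices S (n×n) and N (n×n) with I + N invertible, the function f(t) = log det(I + tN + S) − log det(I + tN) is nonincreasing in t ≥ 0, with derivative f'(t) = Tr(N[(I + tN + S)^{-1} − (I + tN)^{-1}]) ≤ 0. -/
/-!
By Jacobi's formula, read off from the expansion `det (1 + r • M) = 1 + r * trace M + O(r²)`,
`t ↦ log det (A + t • N)` has derivative `trace ((A + t • N)⁻¹ * N)` wherever `A + t • N` is
positive definite. Inversion is operator antitone, so `(1 + t • N)⁻¹ - (1 + t • N + S)⁻¹ ⪰ 0`,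
and the trace of a product of two positive semidefinite matrices is nonnegative: the derivative
is `≤ 0`, and the mean value theorem gives antitonicity.
-/

open scoped ComplexOrder Matrix.Norms.L2Operator

namespace Matrix

variable {n : Type*} [DecidableEq n]

theorem PosSemidef.posDef_one_add_smul {N : Matrix n n ℂ} (hN : N.PosSemidef) {t : ℝ}
    (ht : 0 ≤ t) : (1 + (t : ℂ) • N).PosDef :=
  PosDef.one.add_posSemidef (hN.smul (Complex.zero_le_real.mpr ht))

variable [Fintype n]

open scoped MatrixOrder in
theorem PosSemidef.trace_mul_nonneg {𝕜 : Type*} [RCLike 𝕜] {A B : Matrix n n 𝕜}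
    (hA : A.PosSemidef) (hB : B.PosSemidef) : 0 ≤ (A * B).trace := by
  have hsq : CFC.sqrt B * CFC.sqrt B = B := CFC.sqrt_mul_sqrt_self B hB.nonneg
  have hherm : (CFC.sqrt B)ᴴ = CFC.sqrt B :=
    (nonneg_iff_posSemidef.mp (CFC.sqrt_nonneg B)).isHermitian
  rw [← hsq, ← mul_assoc, trace_mul_cycle]
  simpa [hherm] using (hA.conjTranspose_mul_mul_same (CFC.sqrt B)).trace_nonneg

open scoped MatrixOrder in
theorem PosDef.inv_sub_inv_add_posSemidef {B S : Matrix n n ℂ} (hB : B.PosDef)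
    (hS : S.PosSemidef) : (B⁻¹ - (B + S)⁻¹).PosSemidef := by
  have hle : B ≤ B + S := le_add_of_nonneg_right hS.nonneg
  rw [← nonneg_iff_posSemidef, sub_nonneg, nonsing_inv_eq_ringInverse, nonsing_inv_eq_ringInverse]
  exact CStarAlgebra.ringInverse_le_ringInverse hle hB.isStrictlyPositive

theorem PosSemidef.re_trace_mul_inv_add_sub_inv_nonpos {B S N : Matrix n n ℂ}
    (hN : N.PosSemidef) (hB : B.PosDef) (hS : S.PosSemidef) :
    (N * ((B + S)⁻¹ - B⁻¹)).trace.re ≤ 0 := by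
  rw [← neg_sub, mul_neg, trace_neg, Complex.neg_re, neg_nonpos]
  exact (Complex.nonneg_iff.mp (hN.trace_mul_nonneg (hB.inv_sub_inv_add_posSemidef hS))).1

theorem hasDerivAt_det_one_add_smul {𝕜 : Type*} [NontriviallyNormedField 𝕜]
    (M : Matrix n n 𝕜) : HasDerivAt (fun z : 𝕜 => (1 + z • M).det) M.trace 0 := by
  open Polynomial in
  set Q : 𝕜[X] := 1 + C M.trace * X + (det (1 + (X : 𝕜[X]) • M.map C)).divX.divX * X ^ 2
  have hQ : (fun z : 𝕜 => (1 + z • M).det) = fun z => Q.eval z :=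
    funext fun z => by simp [Q, det_one_add_smul z M]
  rw [hQ]
  simpa [Q] using Q.hasDerivAt 0

theorem hasDerivAt_det_add_smul {𝕜 : Type*} [NontriviallyNormedField 𝕜]
    (A N : Matrix n n 𝕜) {z₀ : 𝕜} (h : IsUnit (A + z₀ • N)) :
    HasDerivAt (fun z : 𝕜 => (A + z • N).det)
      ((A + z₀ • N).det * ((A + z₀ • N)⁻¹ * N).trace) z₀ := by
  set B := A + z₀ • N
  have hfactor : ∀ z : 𝕜, A + z • N = B * (1 + (z - z₀) • (B⁻¹ * N)) := fun z => by
    rw [mul_add, mul_one, mul_smul_comm, ← mul_assoc,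
      mul_nonsing_inv B ((isUnit_iff_isUnit_det B).mp h), one_mul, sub_smul]
    simp only [B]
    abel
  have hshift :
      HasDerivAt (fun z : 𝕜 => (1 + (z - z₀) • (B⁻¹ * N)).det) (B⁻¹ * N).trace z₀ := by
    have h0 := hasDerivAt_det_one_add_smul (B⁻¹ * N)
    rw [← sub_self z₀] at h0
    exact h0.comp_sub_const z₀ z₀
  simp_rw [hfactor, det_mul]
  exact hshift.const_mul B.det

theorem PosDef.hasDerivAt_log_det_add_smul {A N : Matrix n n ℂ} {t₀ : ℝ}
    (h : (A + (t₀ : ℂ) • N).PosDef) :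
    HasDerivAt (fun t : ℝ => Real.log (A + (t : ℂ) • N).det.re)
      ((A + (t₀ : ℂ) • N)⁻¹ * N).trace.re t₀ := by
  obtain ⟨hre, him⟩ := Complex.pos_iff.mp h.det_pos
  have hdet := (hasDerivAt_det_add_smul A N h.isUnit).comp_ofReal
  refine ((Complex.reCLM.hasFDerivAt.comp_hasDerivAt t₀ hdet).log hre.ne').congr_deriv ?_
  simp only [Function.comp_apply, Complex.reCLM_apply, Complex.mul_re, ← him, zero_mul, sub_zero]
  field_simp

theorem hasDerivAt_log_det_one_add_smul_add_sub_log_det {S N : Matrix n n ℂ} (hS : S.PosSemidef)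
    (hN : N.PosSemidef) {t : ℝ} (ht : 0 ≤ t) :
    HasDerivAt
      (fun t : ℝ =>
        Real.log (1 + (t : ℂ) • N + S).det.re - Real.log (1 + (t : ℂ) • N).det.re)
      (N * ((1 + (t : ℂ) • N + S)⁻¹ - (1 + (t : ℂ) • N)⁻¹)).trace.re t := by
  have hB := hN.posDef_one_add_smul ht
  have hA : (1 + S + (t : ℂ) • N).PosDef := by
    rw [add_right_comm]
    exact hB.add_posSemidef hS
  simp_rw [add_right_comm _ _ S]
  rw [mul_sub, trace_sub, trace_mul_comm N, trace_mul_comm N, Complex.sub_re]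
  exact hA.hasDerivAt_log_det_add_smul.sub (hB.hasDerivAt_log_det_add_smul (A := 1))

end Matrix

theorem stmt_19_general {n : ℕ} (S N : Matrix (Fin n) (Fin n) ℂ) (hS : S.PosSemidef) (hN : N.PosSemidef) :
    AntitoneOn (fun t : ℝ =>
      Real.log (((1 : Matrix (Fin n) (Fin n) ℂ) + (t : ℂ) • N + S).det.re) -
      Real.log (((1 : Matrix (Fin n) (Fin n) ℂ) + (t : ℂ) • N).det.re)) (Set.Ici 0) ∧
    ∀ t : ℝ, 0 ≤ t →
      HasDerivAt (fun t : ℝ =>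
        Real.log (((1 : Matrix (Fin n) (Fin n) ℂ) + (t : ℂ) • N + S).det.re) -
        Real.log (((1 : Matrix (Fin n) (Fin n) ℂ) + (t : ℂ) • N).det.re))
        ((Matrix.trace (N * (((1 : Matrix (Fin n) (Fin n) ℂ) + (t : ℂ) • N + S)⁻¹ -
            ((1 : Matrix (Fin n) (Fin n) ℂ) + (t : ℂ) • N)⁻¹))).re) t ∧
      (Matrix.trace (N * (((1 : Matrix (Fin n) (Fin n) ℂ) + (t : ℂ) • N + S)⁻¹ -
            ((1 : Matrix (Fin n) (Fin n) ℂ) + (t : ℂ) • N)⁻¹))).re ≤ 0 := by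
  have hderiv (t : ℝ) (ht : 0 ≤ t) :=
    Matrix.hasDerivAt_log_det_one_add_smul_add_sub_log_det hS hN ht
  have hnonpos (t : ℝ) (ht : 0 ≤ t) :=
    hN.re_trace_mul_inv_add_sub_inv_nonpos (hN.posDef_one_add_smul ht) hS
  refine ⟨antitoneOn_of_hasDerivWithinAt_nonpos (convex_Ici 0)
    (fun t ht => (hderiv t ht).continuousAt.continuousWithinAt)
    (fun t ht => (hderiv t (interior_subset ht)).hasDerivWithinAt)
    (fun t ht => hnonpos t (interior_subset ht)), fun t ht => ⟨hderiv t ht, hnonpos t ht⟩⟩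

/-- f(t) = log det(I + tN + S) − log det(I + tN) is nonincreasing with nonpositive derivative. -/
theorem stmt_19 {n : ℕ} (S N : Matrix (Fin n) (Fin n) ℂ) (hS : S.PosSemidef) (hN : N.PosSemidef)
    (hInv : IsUnit ((1 : Matrix (Fin n) (Fin n) ℂ) + N)) :
    AntitoneOn (fun t : ℝ =>
      Real.log (((1 : Matrix (Fin n) (Fin n) ℂ) + (t : ℂ) • N + S).det.re) -
      Real.log (((1 : Matrix (Fin n) (Fin n) ℂ) + (t : ℂ) • N).det.re)) (Set.Ici 0) ∧
    ∀ t : ℝ, 0 ≤ t →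
      HasDerivAt (fun t : ℝ =>
        Real.log (((1 : Matrix (Fin n) (Fin n) ℂ) + (t : ℂ) • N + S).det.re) -
        Real.log (((1 : Matrix (Fin n) (Fin n) ℂ) + (t : ℂ) • N).det.re))
        ((Matrix.trace (N * (((1 : Matrix (Fin n) (Fin n) ℂ) + (t : ℂ) • N + S)⁻¹ -
            ((1 : Matrix (Fin n) (Fin n) ℂ) + (t : ℂ) • N)⁻¹))).re) t ∧
      (Matrix.trace (N * (((1 : Matrix (Fin n) (Fin n) ℂ) + (t : ℂ) • N + S)⁻¹ -
            ((1 : Matrix (Fin n) (Fin n) ℂ) + (t : ℂ) • N)⁻¹))).re ≤ 0 :=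
  stmt_19_general S N hS hN
end
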